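/- Let K(x) = (1/2)∫_{|x|}^∞ e^{-t}/t dt, and define the operator L(u)(x) = u(x) - ∫_0^∞ K(x-y) u(y) dy. Suppose ū ∈ C([0,∞)) satisfies L(ū)(x) ≥ 0 for all x > 0, and lim_{x→∞} ū(x) exists in [0, ∞]. Then ū(x) ≥ 0 for all x ≥ 0. -/

import Mathlib

/-!
Suppose `u x₀ < 0`. Since `u` is eventually above `u x₀`, it attains a negative minimum
`m = u z` on `[0, ∞)` inside some `[0, R]`. For `0 < x ≤ R` the supersolution inequality gives
`u x ≥ ∫₀^∞ K (x - y) u y dy ≥ m ∫_{-∞}^x K ≥ m ∫_{-∞}^R K`, and by continuity this persists at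
`x = z`, even when `z = 0`. As `K` is a positive density of total mass one, `∫_{-∞}^R K < 1`,
so `m ≥ m ∫_{-∞}^R K > m`, a contradiction. The total mass is computed by Tonelli:
`∫_ℝ ∫_{|x|}^∞ e^{-t}/t dt dx = ∫_0^∞ 2t · e^{-t}/t dt = 2`.
-/

open MeasureTheory Real Set Filter

noncomputable def K (x : ℝ) : ℝ := (1/2) * ∫ t in Set.Ioi |x|, Real.exp (-t) / t

open scoped ENNReal

theorem setIntegral_pos_of_forall_pos {X : Type*} [MeasurableSpace X] {μ : Measure X}
    {s : Set X} {f : X → ℝ} (hs : MeasurableSet s) (hμs : μ s ≠ 0) (hf : IntegrableOn f s μ)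
    (hpos : ∀ x ∈ s, 0 < f x) : 0 < ∫ x in s, f x ∂μ := by
  rw [setIntegral_pos_iff_support_of_nonneg_ae
    (ae_restrict_of_forall_mem hs fun x hx => (hpos x hx).le) hf,
    inter_eq_right.mpr fun x hx => Function.mem_support.mpr (hpos x hx).ne']
  exact pos_iff_ne_zero.mpr hμs

theorem lintegral_lintegral_Ioi_abs {g : ℝ → ℝ≥0∞} (hg : Measurable g) :
    ∫⁻ x, ∫⁻ t in Ioi |x|, g t = ∫⁻ t in Ioi 0, ENNReal.ofReal (2 * t) * g t := by
  set S : Set (ℝ × ℝ) := {p | |p.1| < p.2}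
  have hS : MeasurableSet S := measurableSet_lt (by fun_prop) (by fun_prop)
  have hslice : ∀ t, (fun x => S.indicator (fun p => g p.2) (x, t)) =
      (Ioo (-t) t).indicator fun _ => g t := fun t => by
    ext x
    simp only [S, indicator_apply, mem_ofPred_eq, mem_Ioo, abs_lt]
  calc ∫⁻ x, ∫⁻ t in Ioi |x|, g t
      = ∫⁻ x, ∫⁻ t, S.indicator (fun p => g p.2) (x, t) := by
        refine lintegral_congr fun x => ?_
        rw [← lintegral_indicator measurableSet_Ioi]
        rfl
    _ = ∫⁻ t, ∫⁻ x, S.indicator (fun p => g p.2) (x, t) :=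
        lintegral_lintegral_swap ((hg.comp measurable_snd).indicator hS).aemeasurable
    _ = ∫⁻ t, ENNReal.ofReal (2 * t) * g t := by
        refine lintegral_congr fun t => ?_
        rw [hslice, lintegral_indicator measurableSet_Ioo, setLIntegral_const, Real.volume_Ioo,
          mul_comm, two_mul, sub_neg_eq_add]
    _ = ∫⁻ t in Ioi 0, ENNReal.ofReal (2 * t) * g t := by
        refine (setLIntegral_eq_of_support_subset fun t ht => ?_).symm
        by_contra h
        rw [mem_Ioi, not_lt] at h
        exact ht (by simp [h])

theorem measurable_exp_neg_div : Measurable fun t : ℝ => exp (-t) / t := by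
  fun_prop

theorem exp_neg_div_nonneg_ae_Ioi {a : ℝ} (ha : 0 ≤ a) :
    ∀ᵐ t ∂volume.restrict (Ioi a), 0 ≤ exp (-t) / t :=
  ae_restrict_of_forall_mem measurableSet_Ioi fun _ ht =>
    div_nonneg (exp_pos _).le (ha.trans (le_of_lt ht))

theorem integrableOn_exp_neg_div_Ioi {a : ℝ} (ha : 0 < a) :
    IntegrableOn (fun t => exp (-t) / t) (Ioi a) := by
  refine ((integrableOn_exp_neg_Ioi a).mul_const a⁻¹).mono'
    measurable_exp_neg_div.aestronglyMeasurable ?_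
  filter_upwards [ae_restrict_mem measurableSet_Ioi] with t ht
  rw [norm_of_nonneg (div_nonneg (exp_pos _).le (ha.trans ht).le), div_eq_mul_inv]
  gcongr
  exact ht.le

theorem K_eq_toReal_lintegral (x : ℝ) :
    K x = 1 / 2 * (∫⁻ t in Ioi |x|, ENNReal.ofReal (exp (-t) / t)).toReal := by
  rw [K, integral_eq_lintegral_of_nonneg_ae (exp_neg_div_nonneg_ae_Ioi (abs_nonneg x))
    measurable_exp_neg_div.aestronglyMeasurable]

theorem K_nonneg (x : ℝ) : 0 ≤ K x := by
  rw [K_eq_toReal_lintegral]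
  positivity

theorem measurable_K : Measurable K := by
  have hanti : Antitone fun a : ℝ => ∫⁻ t in Ioi a, ENNReal.ofReal (exp (-t) / t) :=
    fun a b hab => lintegral_mono_set (Ioi_subset_Ioi hab)
  simp_rw [funext K_eq_toReal_lintegral]
  exact measurable_const.mul ((hanti.measurable.comp measurable_abs).ennreal_toReal)

theorem K_pos {x : ℝ} (hx : x ≠ 0) : 0 < K x := by
  have hx' : 0 < |x| := abs_pos.mpr hx
  have := setIntegral_pos_of_forall_pos measurableSet_Ioi (by simp)
    (integrableOn_exp_neg_div_Ioi hx') fun t ht => div_pos (exp_pos _) (hx'.trans ht)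
  rw [K]
  positivity

theorem lintegral_ofReal_K : ∫⁻ x, ENNReal.ofReal (K x) = 1 := by
  have hK : ∀ᵐ x, ENNReal.ofReal (K x) =
      ENNReal.ofReal (1 / 2) * ∫⁻ t in Ioi |x|, ENNReal.ofReal (exp (-t) / t) := by
    -- At `x = 0` the integral diverges and `K 0` is the junk value `0`.
    filter_upwards [Measure.ae_ne volume 0] with x hx
    rw [K, ENNReal.ofReal_mul (by norm_num), ofReal_integral_eq_lintegral_ofReal
      (integrableOn_exp_neg_div_Ioi (abs_pos.mpr hx)) (exp_neg_div_nonneg_ae_Ioi (abs_nonneg x))]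
  have hexp : ∀ t ∈ Ioi (0 : ℝ),
      ENNReal.ofReal (2 * t) * ENNReal.ofReal (exp (-t) / t) = ENNReal.ofReal (2 * exp (-t)) := by
    intro t ht
    rw [← ENNReal.ofReal_mul (by linarith [mem_Ioi.mp ht])]
    congr 1
    field_simp [(mem_Ioi.mp ht).ne']
  rw [lintegral_congr_ae hK, lintegral_const_mul' _ _ ENNReal.ofReal_ne_top,
    lintegral_lintegral_Ioi_abs (by fun_prop), setLIntegral_congr_fun measurableSet_Ioi hexp,
    ← ofReal_integral_eq_lintegral_ofReal ((integrableOn_exp_neg_Ioi 0).const_mul 2)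
      (ae_of_all _ fun t => by positivity),
    integral_const_mul, integral_exp_neg_Ioi_zero, ← ENNReal.ofReal_mul (by norm_num)]
  norm_num

theorem integrable_K : Integrable K :=
  ⟨measurable_K.aestronglyMeasurable, by
    rw [hasFiniteIntegral_iff_ofReal (ae_of_all _ K_nonneg), lintegral_ofReal_K]
    exact ENNReal.one_lt_top⟩

theorem integral_K : ∫ x, K x = 1 := by
  rw [integral_eq_lintegral_of_nonneg_ae (ae_of_all _ K_nonneg)
    measurable_K.aestronglyMeasurable, lintegral_ofReal_K, ENNReal.toReal_one]

theorem setIntegral_Iio_K_lt_one {x : ℝ} (hx : 0 < x) : ∫ t in Iio x, K t < 1 := by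
  have htail : 0 < ∫ t in Ici x, K t :=
    setIntegral_pos_of_forall_pos measurableSet_Ici (by simp) integrable_K.integrableOn
      fun t ht => K_pos (hx.trans_le ht).ne'
  have := intervalIntegral.integral_Iio_add_Ici (b := x) integrable_K.integrableOn
    integrable_K.integrableOn
  linarith [integral_K]

section Kernel

variable {k : ℝ → ℝ}

theorem indicator_Ioi_comp_sub (x : ℝ) :
    (Ioi 0).indicator (fun y => k (x - y)) = fun y => (Iio x).indicator k (x - y) := by
  ext y
  simp only [indicator_apply, mem_Ioi, mem_Iio, sub_lt_self_iff]

theorem setIntegral_Ioi_comp_sub (x : ℝ) : ∫ y in Ioi 0, k (x - y) = ∫ t in Iio x, k t := by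
  rw [← integral_indicator measurableSet_Ioi, indicator_Ioi_comp_sub,
    integral_sub_left_eq_self (fun t => (Iio x).indicator k t),
    integral_indicator measurableSet_Iio]

theorem integrableOn_Ioi_comp_sub (hk : Integrable k) (x : ℝ) :
    IntegrableOn (fun y => k (x - y)) (Ioi 0) := by
  rw [← integrable_indicator_iff measurableSet_Ioi, indicator_Ioi_comp_sub]
  exact (hk.indicator measurableSet_Iio).comp_sub_left x

theorem mul_setIntegral_Iio_le {u : ℝ → ℝ} {m : ℝ} (hk0 : ∀ t, 0 ≤ k t) (hk : Integrable k)
    (hm : m ≤ 0) (hmu : ∀ y > 0, m ≤ u y) (x : ℝ) :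
    m * ∫ t in Iio x, k t ≤ ∫ y in Ioi 0, k (x - y) * u y := by
  by_cases hint : IntegrableOn (fun y => k (x - y) * u y) (Ioi 0)
  · rw [← setIntegral_Ioi_comp_sub, mul_comm, ← integral_mul_const]
    exact setIntegral_mono_on ((integrableOn_Ioi_comp_sub hk x).mul_const m) hint
      measurableSet_Ioi fun y hy => mul_le_mul_of_nonneg_left (hmu y hy) (hk0 _)
  · rw [integral_undef hint]
    exact mul_nonpos_of_nonpos_of_nonneg hm
      (setIntegral_nonneg measurableSet_Iio fun t _ => hk0 t)

end Kernel

theorem nonneg_of_integral_kernel_mul_le {k u : ℝ → ℝ} (hk0 : ∀ t, 0 ≤ k t)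
    (hk : Integrable k) (hk1 : ∀ x > 0, ∫ t in Iio x, k t < 1) (hu : ContinuousOn u (Ici 0))
    (hu_atTop : ∀ c < 0, ∀ᶠ x in atTop, c < u x)
    (hsuper : ∀ x > 0, ∫ y in Ioi 0, k (x - y) * u y ≤ u x) :
    ∀ x ≥ 0, 0 ≤ u x := by
  by_contra! ⟨x₀, hx₀, hux₀⟩
  obtain ⟨M, hM⟩ := eventually_atTop.mp (hu_atTop _ hux₀)
  set R := max M x₀ + 1
  have hx₀R : x₀ ∈ Icc 0 R := ⟨hx₀, by linarith [le_max_right M x₀]⟩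
  have hR : 0 < R := by linarith [le_max_right M x₀]
  obtain ⟨z, hz, hmin⟩ :=
    isCompact_Icc.exists_isMinOn (nonempty_Icc.mpr hR.le) (hu.mono Icc_subset_Ici_self)
  have hzx₀ : u z ≤ u x₀ := hmin hx₀R
  have hglob : ∀ y > 0, u z ≤ u y := fun y hy => by
    by_cases hyR : y ≤ R
    · exact hmin ⟨hy.le, hyR⟩
    · exact hzx₀.trans (hM y (by linarith [le_max_left M x₀])).le
  have hz_neg : u z ≤ 0 := hzx₀.trans hux₀.le
  have hbound : ∀ x ∈ Ioc 0 R, u z * ∫ t in Iio R, k t ≤ u x := fun x hx =>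
    calc u z * ∫ t in Iio R, k t ≤ u z * ∫ t in Iio x, k t :=
          mul_le_mul_of_nonpos_left (setIntegral_mono_set hk.integrableOn (ae_of_all _ hk0)
            (Iio_subset_Iio hx.2).eventuallyLE) hz_neg
      _ ≤ ∫ y in Ioi 0, k (x - y) * u y := mul_setIntegral_Iio_le hk0 hk hz_neg hglob x
      _ ≤ u x := hsuper x hx.1
  -- `z` may be the endpoint `0`, where the bound is only reached by continuity.
  have hz_bound : u z * ∫ t in Iio R, k t ≤ u z :=
    continuousWithinAt_const.closure_le (by rwa [closure_Ioc hR.ne])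
      ((hu z (Icc_subset_Ici_self hz)).mono (Ioc_subset_Icc_self.trans Icc_subset_Ici_self))
      hbound
  nlinarith [hk1 R hR]

theorem max_principle (u : ℝ → ℝ)
    (hcont : ContinuousOn u (Set.Ici 0))
    (hlim : (∃ l : ℝ, 0 ≤ l ∧ Filter.Tendsto u Filter.atTop (nhds l)) ∨
      Filter.Tendsto u Filter.atTop Filter.atTop)
    (hsuper : ∀ x > (0:ℝ), 0 ≤ u x - ∫ y in Set.Ioi (0:ℝ), K (x - y) * u y) :
    ∀ x ≥ (0:ℝ), 0 ≤ u x := by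
  have hu_atTop : ∀ c < 0, ∀ᶠ x in atTop, c < u x := fun c hc => by
    rcases hlim with ⟨l, hl, hul⟩ | hu
    · exact hul.eventually_const_lt (hc.trans_le hl)
    · exact hu.eventually_gt_atTop c
  exact nonneg_of_integral_kernel_mul_le K_nonneg integrable_K
    (fun x hx => setIntegral_Iio_K_lt_one hx) hcont hu_atTop
    fun x hx => sub_nonneg.mp (hsuper x hx)
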